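/- arXiv:1910.08915 — 2 statements merged into one kernel-verified Lean document; each statement's English description precedes it below -/
import Mathlib

section
/- Let G = (V,E) be a finite simple graph. The number of proper 3-colorings of G, i.e. functions f : V → {0,1,2} with f(u) ≠ f(v) for every edge uv of G, equals (−1)^{r(E)} · 3^{k(E)} · T(G; −2, 0). -/
/-!
Expanding `∏_{uv ∈ E} (1 - [f u = f v])` over subsets `A ⊆ E` (inclusion–exclusion) gives
`#proper q-colorings = Σ_{A ⊆ E} (-1)^{|A|} q^{k(A)}`, since the colorings constant on every
edge of `A` are the maps from the components of `(V, A)` to the colors. At `x = 1 - q`, `y = 0`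
the Tutte term of `A` is `(-1)^{r(E) + |A|} q^{k(A) - k(E)}`, because `r(A) ≤ r(E)` and
`r(A) ≤ |A|` (adding an edge merges at most two components); the prefactor
`(-1)^{r(E)} q^{k(E)}` turns it into `(-1)^{|A|} q^{k(A)}`.
-/

/-- The number of connected components of the spanning subgraph `(V, A)`. -/
noncomputable def numComponents {V : Type} (A : Finset (Sym2 V)) : ℕ :=
  Nat.card (SimpleGraph.fromEdgeSet (↑A : Set (Sym2 V))).ConnectedComponent

/-- The rank `r(A) = |V| - k(A)` of an edge set `A`. -/
noncomputable def edgeRank (V : Type) [Fintype V] (A : Finset (Sym2 V)) : ℕ :=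
  Fintype.card V - numComponents A

/-- The Tutte polynomial
`T(G;x,y) = Σ_{A ⊆ E} (x-1)^{r(E)-r(A)} (y-1)^{|A|-r(A)}`, evaluated at `(x,y)`. -/
noncomputable def tutte {V : Type} [Fintype V] [DecidableEq V]
    (G : SimpleGraph V) [DecidableRel G.Adj] (x y : ℝ) : ℝ :=
  ∑ A ∈ G.edgeFinset.powerset,
    (x - 1) ^ (edgeRank V G.edgeFinset - edgeRank V A) * (y - 1) ^ (A.card - edgeRank V A)

open SimpleGraph Finset

namespace SimpleGraph

variable {V α : Type*} {G : SimpleGraph V}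

theorem Reachable.apply_eq_of_forall_adj {f : V → α} (hf : ∀ u v, G.Adj u v → f u = f v)
    {a b : V} (h : G.Reachable a b) : f a = f b := by
  obtain ⟨w⟩ := h
  induction w with
  | nil => rfl
  | cons h _ ih => exact (hf _ _ h).trans ih

def ConnectedComponent.liftEquiv :
    {f : V → α // ∀ u v, G.Adj u v → f u = f v} ≃ (G.ConnectedComponent → α) :=
  (Equiv.subtypeEquivRight fun _ =>
      ⟨fun hf _ _ h => h.apply_eq_of_forall_adj hf, fun hf _ _ h => hf h.reachable⟩).trans
    (Setoid.liftEquiv G.reachableSetoid)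

theorem card_fun_adjInvariant [Finite V] :
    Nat.card {f : V → α // ∀ u v, G.Adj u v → f u = f v} =
      Nat.card α ^ Nat.card G.ConnectedComponent := by
  rw [Nat.card_congr ConnectedComponent.liftEquiv, Nat.card_fun]

theorem Reachable.of_sup_edge {u v a b : V} (h : (G ⊔ edge u v).Reachable a b) :
    G.Reachable a b ∨ (G.Reachable a u ∧ G.Reachable v b) ∨
      (G.Reachable a v ∧ G.Reachable u b) := by
  obtain ⟨w⟩ := h
  induction w with
  | nil => exact .inl .rfl
  | @cons x y z hxy _ ih =>
    rcases (sup_adj _ _ _ _).1 hxy with hG | hE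
    · have hxy := hG.reachable
      rcases ih with h | ⟨h₁, h₂⟩ | ⟨h₁, h₂⟩
      · exact .inl (hxy.trans h)
      · exact .inr (.inl ⟨hxy.trans h₁, h₂⟩)
      · exact .inr (.inr ⟨hxy.trans h₁, h₂⟩)
    · obtain ⟨⟨rfl, rfl⟩ | ⟨rfl, rfl⟩, -⟩ := (edge_adj _ _ _ _).1 hE
      · rcases ih with h | ⟨-, h⟩ | ⟨-, h⟩
        · exact .inr (.inl ⟨.rfl, h⟩)
        · exact .inr (.inl ⟨.rfl, h⟩)
        · exact .inl h
      · rcases ih with h | ⟨-, h⟩ | ⟨-, h⟩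
        · exact .inr (.inr ⟨.rfl, h⟩)
        · exact .inl h
        · exact .inr (.inr ⟨.rfl, h⟩)

theorem card_connectedComponent_le_card_sup_edge_add_one [Finite V] (u v : V) :
    Nat.card G.ConnectedComponent ≤ Nat.card (G ⊔ edge u v).ConnectedComponent + 1 := by
  classical
  -- Components other than that of `v` stay apart in `G ⊔ edge u v` by `Reachable.of_sup_edge`.
  let φ : G.ConnectedComponent → Option (G ⊔ edge u v).ConnectedComponent := fun c =>
    if c = G.connectedComponentMk v then none else some (c.map (Hom.ofLE le_sup_left))
  have hφ : φ.Injective := by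
    refine ConnectedComponent.ind₂ fun a b hab => ?_
    by_cases ha : G.connectedComponentMk a = G.connectedComponentMk v <;>
      by_cases hb : G.connectedComponentMk b = G.connectedComponentMk v <;>
      simp only [φ, ha, hb, if_true, if_false, reduceCtorEq, Option.some_inj] at hab
    · exact ha.trans hb.symm
    · rw [ConnectedComponent.map_mk, ConnectedComponent.map_mk,
        ConnectedComponent.eq] at hab
      rw [ConnectedComponent.eq] at ha hb ⊢
      rcases Reachable.of_sup_edge hab with h | ⟨-, h⟩ | ⟨h, -⟩
      · exact h
      · exact absurd h.symm hb
      · exact absurd h ha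
  simpa [Finite.card_option] using Nat.card_le_card_of_injective φ hφ

theorem fromEdgeSet_insert (e : Sym2 V) (s : Set (Sym2 V)) :
    fromEdgeSet (insert e s) = fromEdgeSet s ⊔ fromEdgeSet {e} := by
  rw [← fromEdgeSet_union, Set.insert_eq, Set.union_comm]

end SimpleGraph

section numComponents

variable {V : Type}

theorem numComponents_le_card [Fintype V] (A : Finset (Sym2 V)) :
    numComponents A ≤ Fintype.card V := by
  rw [← Nat.card_eq_fintype_card]
  exact Nat.card_le_card_of_surjective _ Quot.mk_surjective

theorem numComponents_anti [Finite V] {A B : Finset (Sym2 V)} (h : A ⊆ B) :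
    numComponents B ≤ numComponents A :=
  ConnectedComponent.card_le_card_of_le (fromEdgeSet_mono (coe_subset.2 h))

theorem numComponents_le_numComponents_insert_add_one [Finite V] [DecidableEq V]
    (e : Sym2 V) (A : Finset (Sym2 V)) :
    numComponents A ≤ numComponents (insert e A) + 1 := by
  induction e using Sym2.inductionOn with
  | hf u v =>
    unfold numComponents
    rw [coe_insert, fromEdgeSet_insert]
    exact card_connectedComponent_le_card_sup_edge_add_one u v

theorem edgeRank_empty [Fintype V] : edgeRank V ∅ = 0 := by
  rw [edgeRank, Nat.sub_eq_zero_iff_le, ← Nat.card_eq_fintype_card, numComponents, coe_empty,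
    fromEdgeSet_empty]
  exact Nat.card_le_card_of_injective _ fun _ _ h => reachable_bot.1 (ConnectedComponent.exact h)

theorem edgeRank_le_card [Fintype V] [DecidableEq V] (A : Finset (Sym2 V)) :
    edgeRank V A ≤ #A := by
  induction A using Finset.induction_on with
  | empty => simp [edgeRank_empty]
  | insert e A he ih =>
    have := numComponents_le_numComponents_insert_add_one e A
    rw [card_insert_of_notMem he]
    unfold edgeRank at *
    omega

end numComponents

theorem forall_isDiag_map_iff {V α : Type} (f : V → α) (A : Finset (Sym2 V)) :
    (∀ e ∈ A, (e.map f).IsDiag) ↔ ∀ u v, (fromEdgeSet (A : Set (Sym2 V))).Adj u v → f u = f v := by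
  refine ⟨fun hf u v huv => ?_, fun hf e he => ?_⟩
  · simpa using hf _ ((fromEdgeSet_adj _).1 huv).1
  · induction e using Sym2.inductionOn with
    | hf u v =>
      rw [Sym2.map_mk, Sym2.mk_isDiag_iff]
      by_cases huv : u = v
      · rw [huv]
      · exact hf u v ((fromEdgeSet_adj _).2 ⟨he, huv⟩)

section colorings

variable {V : Type} [Fintype V] [DecidableEq V] {α : Type} [Fintype α] [DecidableEq α]

theorem card_forall_isDiag_map (A : Finset (Sym2 V)) :
    #{f : V → α | ∀ e ∈ A, (e.map f).IsDiag} = Fintype.card α ^ numComponents A := by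
  rw [← Nat.card_eq_fintype_card (α := α), numComponents, ← card_fun_adjInvariant,
    Nat.card_eq_fintype_card, ← Fintype.card_subtype]
  exact Fintype.card_congr (Equiv.subtypeEquivRight fun f => forall_isDiag_map_iff f A)

theorem card_proper_coloring_eq_sum_powerset (G : SimpleGraph V) [DecidableRel G.Adj] :
    (Nat.card {f : V → α // ∀ u v, G.Adj u v → f u ≠ f v} : ℤ) =
      ∑ A ∈ G.edgeFinset.powerset, (-1 : ℤ) ^ #A * Fintype.card α ^ numComponents A := by
  let mono : Sym2 V → Finset (V → α) := fun e => {f | (e.map f).IsDiag}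
  have h_inf (A : Finset (Sym2 V)) :
      A.inf mono = ({f | ∀ e ∈ A, (e.map f).IsDiag} : Finset (V → α)) := by
    ext f
    simp [mono, Finset.mem_inf]
  have h_inf_compl : G.edgeFinset.inf (fun e => (mono e)ᶜ) =
      ({f | ∀ u v, G.Adj u v → f u ≠ f v} : Finset (V → α)) := by
    ext f
    simp [mono, Finset.mem_inf, Sym2.forall]
  have h := inclusion_exclusion_card_inf_compl G.edgeFinset mono
  simp_rw [h_inf_compl, h_inf, card_forall_isDiag_map] at h
  rw [Nat.card_eq_fintype_card, Fintype.card_subtype, h]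
  norm_num

end colorings

section tutte

variable {V : Type} [Fintype V] [DecidableEq V]

theorem neg_one_pow_mul_pow_numComponents_eq_tutte_term {A E : Finset (Sym2 V)} (hAE : A ⊆ E)
    (q : ℝ) :
    (-1) ^ #A * q ^ numComponents A =
      (-1) ^ edgeRank V E * q ^ numComponents E *
        ((1 - q - 1) ^ (edgeRank V E - edgeRank V A) * (0 - 1) ^ (#A - edgeRank V A)) := by
  have hkE := numComponents_le_card E
  have hkA := numComponents_le_card A
  have hanti := numComponents_anti hAE
  have hrank : edgeRank V A ≤ edgeRank V E := by unfold edgeRank; omega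
  have hk : numComponents A = numComponents E + (edgeRank V E - edgeRank V A) := by
    unfold edgeRank; omega
  obtain ⟨d, hd⟩ := Nat.exists_eq_add_of_le hrank
  obtain ⟨m, hm⟩ := Nat.exists_eq_add_of_le (edgeRank_le_card A)
  rw [hk, hm, hd, Nat.add_sub_cancel_left, Nat.add_sub_cancel_left, sub_sub_cancel_left]
  have hsq : ((-1 : ℝ) ^ d) ^ 2 = 1 := by rw [← pow_mul, pow_mul']; simp
  linear_combination (-(-1) ^ edgeRank V A * (-1) ^ m * q ^ numComponents E * q ^ d) * hsq

theorem sum_neg_one_pow_mul_pow_numComponents_eq_tutte (G : SimpleGraph V) [DecidableRel G.Adj]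
    (q : ℝ) :
    ∑ A ∈ G.edgeFinset.powerset, (-1) ^ #A * q ^ numComponents A =
      (-1) ^ edgeRank V G.edgeFinset * q ^ numComponents G.edgeFinset * tutte G (1 - q) 0 := by
  rw [_root_.tutte, mul_sum]
  exact sum_congr rfl fun A hA =>
    neg_one_pow_mul_pow_numComponents_eq_tutte_term (mem_powerset.1 hA) q

end tutte

/-- The number of proper 3-colorings of a finite simple graph `G` equals
`(-1)^{r(E)} · 3^{k(E)} · T(G; -2, 0)`. -/
theorem number_of_proper_three_colorings {V : Type} [Fintype V] [DecidableEq V]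
    (G : SimpleGraph V) [DecidableRel G.Adj] :
    (Nat.card {f : V → Fin 3 // ∀ u v : V, G.Adj u v → f u ≠ f v} : ℝ) =
      (-1) ^ (edgeRank V G.edgeFinset) * 3 ^ (numComponents G.edgeFinset) *
        tutte G (-2) 0 := by
  have h := sum_neg_one_pow_mul_pow_numComponents_eq_tutte G 3
  norm_num at h
  rw [← h]
  exact_mod_cast card_proper_coloring_eq_sum_powerset (α := Fin 3) G
end

section
/- Let E be a finite set and let A₁, …, A_m be subsets of E. Call X ⊆ E a partial transversal of (A₁, …, A_m) if there is an injective map φ : X → {1, …, m} with x ∈ A_{φ(x)} for every x ∈ X. Then the partial transversals of (A₁, …, A_m) are exactly the independent sets of a matroid on E (the transversal matroid of the set system). -/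
open Finset

section TransversalAux

variable {α : Type} [Fintype α] [DecidableEq α] {m : ℕ}

/-- The neighborhood of a finset `S` in the bipartite graph of the set system. -/
noncomputable def tnbr (A : Fin m → Set α) (S : Finset α) : Finset (Fin m) :=
  (Set.toFinite {i | ∃ x ∈ S, x ∈ A i}).toFinset

lemma mem_tnbr {A : Fin m → Set α} {S : Finset α} {i : Fin m} :
    i ∈ tnbr A S ↔ ∃ x ∈ S, x ∈ A i := (Set.toFinite _).mem_toFinset

lemma tnbr_mono {A : Fin m → Set α} {S T : Finset α} (h : S ⊆ T) :
    tnbr A S ⊆ tnbr A T := by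
  intro i hi
  rw [mem_tnbr] at hi ⊢
  obtain ⟨x, hx, h2⟩ := hi
  exact ⟨x, h hx, h2⟩

lemma tnbr_union (A : Fin m → Set α) (S T : Finset α) :
    tnbr A (S ∪ T) = tnbr A S ∪ tnbr A T := by
  ext i
  simp only [mem_tnbr, Finset.mem_union]
  constructor
  · rintro ⟨x, hx | hx, h2⟩
    · exact Or.inl ⟨x, hx, h2⟩
    · exact Or.inr ⟨x, hx, h2⟩
  · rintro (⟨x, hx, h2⟩ | ⟨x, hx, h2⟩)
    · exact ⟨x, Or.inl hx, h2⟩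
    · exact ⟨x, Or.inr hx, h2⟩

lemma tnbr_empty (A : Fin m → Set α) : tnbr A ∅ = ∅ := by
  ext i; simp [mem_tnbr]

/-- Hall's condition characterizes partial transversals. -/
lemma pt_iff_hall (A : Fin m → Set α) (X : Set α) :
    (∃ φ : X → Fin m, Function.Injective φ ∧ ∀ x : X, (x : α) ∈ A (φ x)) ↔
      ∀ S ⊆ X.toFinite.toFinset, S.card ≤ (tnbr A S).card := by
  classical
  haveI : Fintype X := X.toFinite.fintype
  set t : X → Finset (Fin m) := fun x => Finset.univ.filter (fun i => (x : α) ∈ A i) with ht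
  have hmem : ∀ (x : X) (i : Fin m), i ∈ t x ↔ (x : α) ∈ A i := by
    intro x i; simp [ht]
  have hall := Finset.all_card_le_biUnion_card_iff_exists_injective t
  have hbi : ∀ s : Finset X, s.biUnion t = tnbr A (s.image (↑)) := by
    intro s
    ext i
    simp only [Finset.mem_biUnion, mem_tnbr, Finset.mem_image]
    constructor
    · rintro ⟨x, hx, hix⟩
      exact ⟨(x : α), ⟨x, hx, rfl⟩, (hmem x i).1 hix⟩
    · rintro ⟨a, ⟨x, hx, rfl⟩, hia⟩
      exact ⟨x, hx, (hmem x i).2 hia⟩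
  constructor
  · rintro ⟨φ, h1, h2⟩ S hS
    have hHall := hall.mpr ⟨φ, h1, fun x => (hmem x (φ x)).2 (h2 x)⟩
    -- realize S as an image of a finset of the subtype
    set s : Finset X := S.attach.map
      ⟨fun a => (⟨a.1, X.toFinite.mem_toFinset.1 (hS a.2)⟩ : X),
        by
          intro a b hab
          rw [Subtype.mk.injEq] at hab
          exact Subtype.ext hab⟩ with hs
    have himg : s.image (↑) = S := by
      ext a
      simp only [hs, Finset.mem_image, Finset.mem_map, Finset.mem_attach,
        Function.Embedding.coeFn_mk, true_and]
      constructor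
      · rintro ⟨x, ⟨b, hb⟩, rfl⟩
        have hbx : (b : α) = (x : α) := congrArg Subtype.val hb
        rw [← hbx]
        exact b.2
      · intro ha
        exact ⟨⟨a, X.toFinite.mem_toFinset.1 (hS ha)⟩, ⟨⟨a, ha⟩, rfl⟩, rfl⟩
    have hcard : s.card = S.card := by simp [hs]
    have := hHall s
    rwa [hbi, himg, hcard] at this
  · intro h
    have hcond : ∀ s : Finset X, s.card ≤ (s.biUnion t).card := ?_
    · obtain ⟨f, h1, h2⟩ := hall.mp hcond
      exact ⟨f, h1, fun x => (hmem x _).1 (h2 x)⟩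
    intro s
    have hsub : s.image (↑) ⊆ X.toFinite.toFinset := by
      intro a ha
      obtain ⟨x, _, rfl⟩ := Finset.mem_image.1 ha
      exact X.toFinite.mem_toFinset.2 x.2
    have hcard : (s.image (↑) : Finset α).card = s.card :=
      Finset.card_image_of_injective _ Subtype.val_injective
    rw [hbi]
    rw [← hcard]
    exact h _ hsub

/-- The exchange (augmentation) property, in Hall form. -/
lemma hall_aug (A : Fin m → Set α) (x y : Finset α)
    (hX : ∀ S ⊆ x, S.card ≤ (tnbr A S).card)
    (hY : ∀ S ⊆ y, S.card ≤ (tnbr A S).card)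
    (hcard : x.card < y.card) :
    ∃ e ∈ y, e ∉ x ∧ ∀ S ⊆ insert e x, S.card ≤ (tnbr A S).card := by
  classical
  by_contra hcon
  push_neg at hcon
  -- for each e ∈ y \ x, get a "tight" violating set insert e T with T ⊆ x
  have hT : ∀ e ∈ y \ x, ∃ T ⊆ x, (tnbr A (insert e T)).card ≤ T.card := by
    intro e he
    rw [Finset.mem_sdiff] at he
    obtain ⟨S, hS, hS2⟩ := hcon e he.1 he.2
    have heS : e ∈ S := by
      by_contra heS
      refine absurd (hX S fun a ha => ?_) (Nat.not_le_of_lt hS2)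
      rcases Finset.mem_insert.1 (hS ha) with rfl | h
      · exact absurd ha heS
      · exact h
    refine ⟨S.erase e, ?_, ?_⟩
    · intro a ha
      rw [Finset.mem_erase] at ha
      rcases Finset.mem_insert.1 (hS ha.2) with rfl | h
      · exact absurd rfl ha.1
      · exact h
    · rw [Finset.insert_erase heS, Finset.card_erase_of_mem heS]
      omega
  choose! T hTx hTc using hT
  -- build a big deficient set by submodularity
  have key : ∀ D ⊆ y \ x, ∃ W : Finset α, D ⊆ W ∧ W ⊆ x ∪ D ∧
      ((tnbr A W).card : ℤ) ≤ (W.card : ℤ) - D.card := by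
    intro D
    induction D using Finset.induction_on with
    | empty =>
      intro _
      exact ⟨∅, Finset.Subset.refl _, by simp, by simp [tnbr_empty]⟩
    | @insert a D ha IH =>
      intro hsub
      have haYX : a ∈ y \ x := hsub (Finset.mem_insert_self a D)
      have haX : a ∉ x := (Finset.mem_sdiff.1 haYX).2
      obtain ⟨W, h1, h2, h3⟩ :=
        IH (fun b hb => hsub (Finset.mem_insert_of_mem hb))
      set Sa : Finset α := insert a (T a) with hSa
      have haTa : a ∉ T a := fun h => haX (hTx a haYX h)
      have haW : a ∉ W := by
        intro h
        rcases Finset.mem_union.1 (h2 h) with h' | h'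
        · exact haX h'
        · exact ha h'
      have hWSa : W ∩ Sa ⊆ x := by
        intro b hb
        rw [Finset.mem_inter] at hb
        rcases Finset.mem_insert.1 hb.2 with rfl | h
        · exact absurd hb.1 haW
        · exact hTx a haYX h
      have c1 := Finset.card_union_add_card_inter W Sa
      have c2 := Finset.card_union_add_card_inter (tnbr A W) (tnbr A Sa)
      have c3 : (tnbr A (W ∩ Sa)).card ≤ (tnbr A W ∩ tnbr A Sa).card :=
        Finset.card_le_card (Finset.subset_inter
          (tnbr_mono Finset.inter_subset_left) (tnbr_mono Finset.inter_subset_right))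
      have c4 : (W ∩ Sa).card ≤ (tnbr A (W ∩ Sa)).card := hX _ hWSa
      have c5 : (tnbr A Sa).card ≤ (T a).card := hTc a haYX
      have c6 : Sa.card = (T a).card + 1 := Finset.card_insert_of_notMem haTa
      have c7 : (insert a D).card = D.card + 1 := Finset.card_insert_of_notMem ha
      refine ⟨W ∪ Sa, ?_, ?_, ?_⟩
      · intro b hb
        rcases Finset.mem_insert.1 hb with rfl | hb
        · exact Finset.mem_union_right _ (Finset.mem_insert_self _ _)
        · exact Finset.mem_union_left _ (h1 hb)
      · intro b hb
        rcases Finset.mem_union.1 hb with hb | hb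
        · rcases Finset.mem_union.1 (h2 hb) with hb | hb
          · exact Finset.mem_union_left _ hb
          · exact Finset.mem_union_right _ (Finset.mem_insert_of_mem hb)
        · rcases Finset.mem_insert.1 hb with rfl | hb
          · exact Finset.mem_union_right _ (Finset.mem_insert_self _ _)
          · exact Finset.mem_union_left _ (hTx a haYX hb)
      · rw [tnbr_union]
        omega
  obtain ⟨W, h1, h2, h3⟩ := key (y \ x) (Finset.Subset.refl _)
  -- final counting contradiction
  have f1 : (y ∩ W).card ≤ (tnbr A W).card :=
    le_trans (hY _ Finset.inter_subset_left)
      (Finset.card_le_card (tnbr_mono Finset.inter_subset_right))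
  have hWx : W \ x = y \ x := by
    apply Finset.Subset.antisymm
    · intro b hb
      rw [Finset.mem_sdiff] at hb
      rcases Finset.mem_union.1 (h2 hb.1) with h | h
      · exact absurd h hb.2
      · exact h
    · intro b hb
      rw [Finset.mem_sdiff]
      exact ⟨h1 hb, (Finset.mem_sdiff.1 hb).2⟩
  have c1 : (W ∩ x).card + (W \ x).card = W.card := Finset.card_inter_add_card_sdiff W x
  have hyWx : (y ∩ W) \ x = y \ x := by
    apply Finset.Subset.antisymm
    · intro b hb
      rw [Finset.mem_sdiff, Finset.mem_inter] at hb
      exact Finset.mem_sdiff.2 ⟨hb.1.1, hb.2⟩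
    · intro b hb
      rw [Finset.mem_sdiff] at hb ⊢
      exact ⟨Finset.mem_inter.2 ⟨hb.1, h1 (Finset.mem_sdiff.2 hb)⟩, hb.2⟩
  have c2 : ((y ∩ W) ∩ x).card + ((y ∩ W) \ x).card = (y ∩ W).card :=
    Finset.card_inter_add_card_sdiff _ _
  have c3 : ((W ∩ x) ∩ y).card + ((W ∩ x) \ y).card = (W ∩ x).card :=
    Finset.card_inter_add_card_sdiff _ _
  have hEq : (y ∩ W) ∩ x = (W ∩ x) ∩ y := by
    ext b
    simp only [Finset.mem_inter]
    tauto
  have c4 : ((W ∩ x) \ y).card ≤ (x \ y).card :=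
    Finset.card_le_card (Finset.sdiff_subset_sdiff Finset.inter_subset_right
      (Finset.Subset.refl _))
  have c5 : (x ∩ y).card + (x \ y).card = x.card := Finset.card_inter_add_card_sdiff x y
  have c6 : (y ∩ x).card + (y \ x).card = y.card := Finset.card_inter_add_card_sdiff y x
  have hEq2 : x ∩ y = y ∩ x := Finset.inter_comm x y
  rw [hEq] at c2
  rw [hWx] at c1
  rw [hyWx] at c2
  rw [hEq2] at c5
  omega

end TransversalAux

/-- Transversal matroids: given subsets `A 1, …, A m` of a finite set `E`, the
partial transversals of `(A 1, …, A m)` — the sets `X ⊆ E` admitting an injection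
`φ : X → {1,…,m}` with `x ∈ A (φ x)` for all `x ∈ X` — are exactly the
independent sets of a matroid on `E`. -/
theorem transversal_matroid_exists {α : Type} [Fintype α] (m : ℕ)
    (A : Fin m → Set α) :
    ∃ M : Matroid α, M.E = Set.univ ∧
      ∀ X : Set α, M.Indep X ↔
        ∃ φ : X → Fin m, Function.Injective φ ∧ ∀ x : X, (x : α) ∈ A (φ x) := by
  classical
  set Ind : Set α → Prop := fun X =>
    ∃ φ : X → Fin m, Function.Injective φ ∧ ∀ x : X, (x : α) ∈ A (φ x) with hInd
  have indep_empty : Ind ∅ :=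
    ⟨fun x => absurd x.2 (Set.notMem_empty _),
      fun a => absurd a.2 (Set.notMem_empty _),
      fun x => absurd x.2 (Set.notMem_empty _)⟩
  have indep_subset : ∀ ⦃I J : Set α⦄, Ind J → I ⊆ J → Ind I := by
    rintro I J ⟨φ, h1, h2⟩ hIJ
    refine ⟨fun x => φ ⟨x, hIJ x.2⟩, ?_, fun x => h2 _⟩
    intro a b hab
    have := h1 hab
    rw [Subtype.mk.injEq] at this
    exact Subtype.ext this
  have indep_aug : ∀ ⦃I J : Set α⦄, Ind I → Ind J → I.ncard < J.ncard →
      ∃ e ∈ J, e ∉ I ∧ Ind (insert e I) := by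
    intro I J hI hJ hlt
    have hI' := (pt_iff_hall A I).1 hI
    have hJ' := (pt_iff_hall A J).1 hJ
    have hlt' : (I.toFinite.toFinset).card < (J.toFinite.toFinset).card := by
      rwa [← Set.ncard_eq_toFinset_card I I.toFinite,
        ← Set.ncard_eq_toFinset_card J J.toFinite]
    obtain ⟨e, he, heI, hall⟩ := hall_aug A _ _ hI' hJ' hlt'
    refine ⟨e, J.toFinite.mem_toFinset.1 he, fun h => heI (I.toFinite.mem_toFinset.2 h), ?_⟩
    refine (pt_iff_hall A (insert e I)).2 ?_
    have heq : (insert e I).toFinite.toFinset = insert e I.toFinite.toFinset := by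
      ext a
      simp only [Set.Finite.mem_toFinset, Finset.mem_insert, Set.mem_insert_iff]
    rw [heq]
    exact hall
  refine ⟨(IndepMatroid.ofFinite Set.finite_univ Ind indep_empty indep_subset indep_aug
    (fun I _ => Set.subset_univ I)).matroid, by simp, fun X => ?_⟩
  simp only [IndepMatroid.ofFinite, IndepMatroid.ofBddAugment,
    IndepMatroid.matroid_Indep]
  rfl
end
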